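/- arXiv:2210.12021 — 6 statements merged into one kernel-verified Lean document; each statement's English description precedes it below -/
import Mathlib

section
/- In a 2-category, if f ⊣ g is an adjunction between 1-cells, then the unit of the adjunction is invertible if and only if f is fully faithful (i.e., for every object x, the functor Hom(x, f) : Hom(x, e) → Hom(x, b) induced by postcomposition with f is fully faithful). -/
/-!
Postcomposition with `f ⊣ g` gives, for every object `x`, an adjunction
`(x ⟶ e) ⥤ (x ⟶ b)` whose unit at `u` is `u ◁ η` up to unitors and associators. An adjunction of
ordinary categories has an invertible unit iff its left adjoint is fully faithful, and `η` is
invertible iff all its whiskerings `u ◁ η` are, since `𝟙 e ◁ η` is `η` up to unitors.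
-/

open CategoryTheory CategoryTheory.Bicategory

universe w v u

theorem CategoryTheory.Adjunction.isIso_unit_iff_full_and_faithful {C D : Type*} [Category C]
    [Category D] {L : C ⥤ D} {R : D ⥤ C} (h : L ⊣ R) : IsIso h.unit ↔ L.Full ∧ L.Faithful := by
  refine ⟨fun _ => ?_, fun ⟨_, _⟩ => inferInstance⟩
  have hL := h.fullyFaithfulLOfIsIsoUnit
  exact ⟨hL.full, hL.faithful⟩

namespace CategoryTheory.Bicategory

variable {B : Type u} [Bicategory.{w, v} B]

theorem isIso_iff_forall_isIso_postcomposing_map {a b : B} {f g : a ⟶ b} (η : f ⟶ g) :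
    IsIso η ↔ ∀ x, IsIso ((postcomposing x a b).map η) := by
  refine ⟨fun _ _ => inferInstance, fun h => ?_⟩
  have := h a
  have : IsIso (𝟙 a ◁ η) := NatIso.isIso_app_of_isIso ((postcomposing a a b).map η) (𝟙 a)
  rw [id_whiskerLeft_symm η]
  infer_instance

namespace Adjunction

variable {e b : B} {f : e ⟶ b} {g : b ⟶ e}

def postcompAdjunction (adj : f ⊣ g) (x : B) :
    (postcomposing x e b).obj f ⊣ (postcomposing x b e).obj g :=
  CategoryTheory.Adjunction.mkOfUnitCounit
    { unit := (rightUnitorNatIso x e).inv ≫ (postcomposing x e e).map adj.unit ≫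
        (associatorNatIsoLeft x f g).inv
      counit := (associatorNatIsoLeft x g f).hom ≫ (postcomposing x b b).map adj.counit ≫
        (rightUnitorNatIso x b).hom
      left_triangle := by
        ext u
        simp only [postcomposing, Bicategory.postcomp, NatTrans.comp_app, NatTrans.id_app',
          Functor.whiskerLeft_app, Functor.whiskerRight_app, Functor.associator_hom_app,
          rightUnitorNatIso_hom_app, rightUnitorNatIso_inv_app,
          associatorNatIsoLeft_hom_app, associatorNatIsoLeft_inv_app]
        calc _ = 𝟙 _ ⊗≫ u ◁ leftZigzag adj.unit adj.counit ⊗≫ 𝟙 _ := by bicategory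
          _ = 𝟙 (u ≫ f) := by rw [adj.left_triangle]; bicategory
      right_triangle := by
        ext v
        simp only [postcomposing, Bicategory.postcomp, NatTrans.comp_app, NatTrans.id_app',
          Functor.whiskerLeft_app, Functor.whiskerRight_app, Functor.associator_inv_app,
          rightUnitorNatIso_hom_app, rightUnitorNatIso_inv_app,
          associatorNatIsoLeft_hom_app, associatorNatIsoLeft_inv_app]
        calc _ = 𝟙 _ ⊗≫ v ◁ rightZigzag adj.unit adj.counit ⊗≫ 𝟙 _ := by bicategory
          _ = 𝟙 (v ≫ g) := by rw [adj.right_triangle]; bicategory }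

theorem isIso_postcompAdjunction_unit_iff (adj : f ⊣ g) (x : B) :
    IsIso (adj.postcompAdjunction x).unit ↔ IsIso ((postcomposing x e e).map adj.unit) := by
  change IsIso (_ ≫ _ ≫ _) ↔ _
  rw [isIso_comp_left_iff, isIso_comp_right_iff]

end Adjunction

end CategoryTheory.Bicategory

theorem stmt2 {B : Type u} [Bicategory.{w, v} B] {e b : B}
    (f : e ⟶ b) (g : b ⟶ e) (adj : Bicategory.Adjunction f g) :
    IsIso adj.unit ↔
      ∀ x : B, ((Bicategory.postcomposing x e b).obj f).Full ∧
        ((Bicategory.postcomposing x e b).obj f).Faithful := by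
  rw [isIso_iff_forall_isIso_postcomposing_map]
  refine forall_congr' fun x => ?_
  rw [← adj.isIso_postcompAdjunction_unit_iff,
    (adj.postcompAdjunction x).isIso_unit_iff_full_and_faithful]
end

section
/- In a 2-category, if f ⊣ g is an adjunction between 1-cells, then the unit is invertible if and only if g is a lax epimorphism, i.e., A(g, c) : A(e, c) → A(b, c) is fully faithful for all objects c. -/
open CategoryTheory CategoryTheory.Bicategory

universe w v u

/-- The adjunction on hom-categories induced by an adjunction in a bicategory. -/
def homAdj {B : Type u} [Bicategory.{w, v} B] {e b : B}
    (f : e ⟶ b) (g : b ⟶ e) (adj : Bicategory.Adjunction f g) (c : B) :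
    CategoryTheory.Adjunction ((Bicategory.precomposing b e c).obj g)
      ((Bicategory.precomposing e b c).obj f) where
  unit :=
    { app := fun h => (λ_ h).inv ≫ adj.unit ▷ h ≫ (α_ f g h).hom
      naturality := by
        intro h h' θ
        dsimp
        calc θ ≫ (λ_ h').inv ≫ adj.unit ▷ h' ≫ (α_ f g h').hom
            = 𝟙 _ ⊗≫ (𝟙 e ◁ θ ≫ adj.unit ▷ h') ⊗≫ 𝟙 _ := by bicategory
          _ = 𝟙 _ ⊗≫ (adj.unit ▷ h ≫ (f ≫ g) ◁ θ) ⊗≫ 𝟙 _ := by rw [whisker_exchange]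
          _ = ((λ_ h).inv ≫ adj.unit ▷ h ≫ (α_ f g h).hom) ≫ f ◁ g ◁ θ := by bicategory }
  counit :=
    { app := fun k => (α_ g f k).inv ≫ adj.counit ▷ k ≫ (λ_ k).hom
      naturality := by
        intro k k' θ
        dsimp
        calc g ◁ f ◁ θ ≫ (α_ g f k').inv ≫ adj.counit ▷ k' ≫ (λ_ k').hom
            = 𝟙 _ ⊗≫ ((g ≫ f) ◁ θ ≫ adj.counit ▷ k') ⊗≫ 𝟙 _ := by bicategory
          _ = 𝟙 _ ⊗≫ (adj.counit ▷ k ≫ 𝟙 b ◁ θ) ⊗≫ 𝟙 _ := by rw [whisker_exchange]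
          _ = ((α_ g f k).inv ≫ adj.counit ▷ k ≫ (λ_ k).hom) ≫ θ := by bicategory }
  left_triangle_components := by
    intro h
    dsimp
    calc g ◁ ((λ_ h).inv ≫ adj.unit ▷ h ≫ (α_ f g h).hom) ≫
          (α_ g f (g ≫ h)).inv ≫ adj.counit ▷ (g ≫ h) ≫ (λ_ (g ≫ h)).hom
        = 𝟙 _ ⊗≫ Bicategory.rightZigzag adj.unit adj.counit ▷ h ⊗≫ 𝟙 _ := by
          dsimp only [Bicategory.rightZigzag]; bicategory
      _ = 𝟙 (g ≫ h) := by rw [adj.right_triangle]; bicategory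
  right_triangle_components := by
    intro k
    dsimp
    calc ((λ_ (f ≫ k)).inv ≫ adj.unit ▷ (f ≫ k) ≫ (α_ f g (f ≫ k)).hom) ≫
          f ◁ ((α_ g f k).inv ≫ adj.counit ▷ k ≫ (λ_ k).hom)
        = 𝟙 _ ⊗≫ Bicategory.leftZigzag adj.unit adj.counit ▷ k ⊗≫ 𝟙 _ := by
          dsimp only [Bicategory.leftZigzag]; bicategory
      _ = 𝟙 (f ≫ k) := by rw [adj.left_triangle]; bicategory

theorem stmt3 {B : Type u} [Bicategory.{w, v} B] {e b : B}
    (f : e ⟶ b) (g : b ⟶ e) (adj : Bicategory.Adjunction f g) :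
    IsIso adj.unit ↔
      ∀ c : B, ((Bicategory.precomposing b e c).obj g).Full ∧
        ((Bicategory.precomposing b e c).obj g).Faithful := by
  constructor
  · intro hη c
    haveI : ∀ h : e ⟶ c, IsIso ((homAdj f g adj c).unit.app h) := by
      intro h
      dsimp [homAdj]
      exact IsIso.comp_isIso' (Iso.isIso_inv _) (IsIso.comp_isIso' (whiskerRight_isIso _ _) (Iso.isIso_hom _))
    haveI : IsIso (homAdj f g adj c).unit := NatIso.isIso_of_isIso_app _
    have F := (homAdj f g adj c).fullyFaithfulLOfIsIsoUnit
    exact ⟨F.full, F.faithful⟩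
  · intro h
    obtain ⟨hfull, hfaith⟩ := h e
    haveI : IsIso ((homAdj f g adj e).unit.app (𝟙 e)) := inferInstance
    have heq : adj.unit =
        (ρ_ (𝟙 e)).inv ≫ ((λ_ (𝟙 e)).hom ≫ (homAdj f g adj e).unit.app (𝟙 e) ≫
          (α_ f g (𝟙 e)).inv) ≫ (ρ_ (f ≫ g)).hom := by
      dsimp [homAdj]
      bicategory
    rw [heq]
    exact IsIso.comp_isIso' (Iso.isIso_inv _) (IsIso.comp_isIso' (IsIso.comp_isIso' (Iso.isIso_hom _) (IsIso.comp_isIso' this (Iso.isIso_inv _))) (Iso.isIso_hom _))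
end

section
/- In a 2-category, a 1-cell p that has a right adjoint is an equivalence if and only if p is both fully faithful and a lax epimorphism. -/
/-!
An adjunction `p ⊣ g` induces, through its mate bijections, adjunctions `A(x, p) ⊣ A(x, g)` and
`A(g, c) ⊣ A(p, c)` of hom-categories, whose units and counits are whiskerings of those of
`p ⊣ g`. A left adjoint functor is fully faithful iff its unit is invertible, a right adjoint iff
its counit is; taking `x = e` and `c = b` and evaluating at the identity 1-cells makes the unit
and counit of `p ⊣ g` invertible. Conversely, pre- and postcomposition with an equivalence are
equivalences of hom-categories.
-/

open CategoryTheory CategoryTheory.Bicategory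

universe w v u

namespace CategoryTheory.Bicategory

variable {B : Type u} [Bicategory.{w, v} B] {a b : B}

namespace Adjunction

variable {l : a ⟶ b} {r : b ⟶ a} (adj : l ⊣ r)

theorem homEquiv₁_naturality_left {d : B} {g' g : a ⟶ d} {h : b ⟶ d} (φ : g' ⟶ g)
    (γ : g ⟶ l ≫ h) : adj.homEquiv₁ (φ ≫ γ) = r ◁ φ ≫ adj.homEquiv₁ γ := by
  simp [homEquiv₁_apply]

theorem homEquiv₁_naturality_right_symm {d : B} {g : a ⟶ d} {h h' : b ⟶ d} (β : r ≫ g ⟶ h)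
    (θ : h ⟶ h') : adj.homEquiv₁.symm (β ≫ θ) = adj.homEquiv₁.symm β ≫ l ◁ θ := by
  simp [homEquiv₁_symm_apply]

theorem homEquiv₂_naturality_left_symm {x : B} {g' g : x ⟶ a} {h : x ⟶ b} (φ : g' ⟶ g)
    (γ : g ⟶ h ≫ r) : adj.homEquiv₂.symm (φ ≫ γ) = φ ▷ l ≫ adj.homEquiv₂.symm γ := by
  simp [homEquiv₂_symm_apply]

theorem homEquiv₂_naturality_right {x : B} {g : x ⟶ a} {h h' : x ⟶ b} (α : g ≫ l ⟶ h)
    (θ : h ⟶ h') : adj.homEquiv₂ (α ≫ θ) = adj.homEquiv₂ α ≫ θ ▷ r := by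
  simp [homEquiv₂_apply]

def postcomp (x : B) :
    CategoryTheory.Adjunction (Bicategory.postcomp x l) (Bicategory.postcomp x r) :=
  .mkOfHomEquiv
    { homEquiv _ _ := adj.homEquiv₂
      homEquiv_naturality_left_symm := adj.homEquiv₂_naturality_left_symm
      homEquiv_naturality_right := adj.homEquiv₂_naturality_right }

def precomp (c : B) :
    CategoryTheory.Adjunction (Bicategory.precomp c r) (Bicategory.precomp c l) :=
  .mkOfHomEquiv
    { homEquiv _ _ := adj.homEquiv₁.symm
      homEquiv_naturality_left_symm := adj.homEquiv₁_naturality_left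
      homEquiv_naturality_right := adj.homEquiv₁_naturality_right_symm }

theorem postcomp_unit_app {x : B} (g : x ⟶ a) :
    (adj.postcomp x).unit.app g = (ρ_ g).inv ≫ g ◁ adj.unit ≫ (α_ g l r).inv := by
  change adj.homEquiv₂ (𝟙 (g ≫ l)) = _
  simp [homEquiv₂_apply]

theorem precomp_counit_app {c : B} (h : b ⟶ c) :
    (adj.precomp c).counit.app h = (α_ r l h).inv ≫ adj.counit ▷ h ≫ (λ_ h).hom := by
  change adj.homEquiv₁ (𝟙 (l ≫ h)) = _
  simp [homEquiv₁_apply]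

theorem isIso_unit_of_postcomp_full_faithful [(Bicategory.postcomp a l).Full]
    [(Bicategory.postcomp a l).Faithful] : IsIso adj.unit := by
  have h : IsIso ((ρ_ (𝟙 a)).inv ≫ 𝟙 a ◁ adj.unit ≫ (α_ (𝟙 a) l r).inv) := by
    rw [← postcomp_unit_app]
    exact NatIso.isIso_app_of_isIso _ _
  simpa using h

theorem isIso_counit_of_precomp_full_faithful [(Bicategory.precomp b l).Full]
    [(Bicategory.precomp b l).Faithful] : IsIso adj.counit := by
  have h : IsIso ((α_ r l (𝟙 b)).inv ≫ adj.counit ▷ 𝟙 b ≫ (λ_ (𝟙 b)).hom) := by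
    rw [← precomp_counit_app]
    exact NatIso.isIso_app_of_isIso _ _
  simpa using h

end Adjunction

section

variable {l : a ⟶ b} {r : b ⟶ a} (η : 𝟙 a ≅ l ≫ r) (ϵ : r ≫ l ≅ 𝟙 b)

def postcompEquivalence (x : B) : (x ⟶ a) ≌ (x ⟶ b) :=
  .mk (postcomp x l) (postcomp x r)
    ((rightUnitorNatIso x a).symm ≪≫ (postcomposing x a a).mapIso η ≪≫
      (associatorNatIsoLeft x l r).symm)
    (associatorNatIsoLeft x r l ≪≫ (postcomposing x b b).mapIso ϵ ≪≫ rightUnitorNatIso x b)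

def precompEquivalence (c : B) : (b ⟶ c) ≌ (a ⟶ c) :=
  .mk (precomp c l) (precomp c r)
    ((leftUnitorNatIso b c).symm ≪≫ (precomposing b b c).mapIso ϵ.symm ≪≫
      associatorNatIsoRight r l c)
    ((associatorNatIsoRight l r c).symm ≪≫ (precomposing a a c).mapIso η.symm ≪≫
      leftUnitorNatIso a c)

end

end CategoryTheory.Bicategory

theorem stmt4 {B : Type u} [Bicategory.{w, v} B] {e b : B}
    (p : e ⟶ b) (g : b ⟶ e) (adj : Bicategory.Adjunction p g) :
    (∃ q : b ⟶ e, Nonempty (𝟙 e ≅ p ≫ q) ∧ Nonempty (q ≫ p ≅ 𝟙 b)) ↔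
      ((∀ x : B, ((Bicategory.postcomposing x e b).obj p).Full ∧
          ((Bicategory.postcomposing x e b).obj p).Faithful) ∧
        (∀ c : B, ((Bicategory.precomposing e b c).obj p).Full ∧
          ((Bicategory.precomposing e b c).obj p).Faithful)) := by
  constructor
  · rintro ⟨q, ⟨η⟩, ⟨ϵ⟩⟩
    exact ⟨fun x => ⟨(postcompEquivalence η ϵ x).full_functor,
        (postcompEquivalence η ϵ x).faithful_functor⟩,
      fun c => ⟨(precompEquivalence η ϵ c).full_functor,
        (precompEquivalence η ϵ c).faithful_functor⟩⟩
  · rintro ⟨hpost, hpre⟩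
    have : (postcomp e p).Full := (hpost e).1
    have : (postcomp e p).Faithful := (hpost e).2
    have : (precomp b p).Full := (hpre b).1
    have : (precomp b p).Faithful := (hpre b).2
    have := adj.isIso_unit_of_postcomp_full_faithful
    have := adj.isIso_counit_of_precomp_full_faithful
    exact ⟨g, ⟨asIso adj.unit⟩, ⟨asIso adj.counit⟩⟩
end

section
/- A functor p : e → b between small categories is fully faithful if and only if the left Kan extension functor Lan_p : [eᵒᵖ, Set] → [bᵒᵖ, Set] along p (equivalently, left Kan extension of presheaves) is fully faithful. -/
/-!
If `p` is fully faithful, the unit `F ⟶ p* (Lan_p F)` of the adjunction `Lan_p ⊣ p*` is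
invertible (it is computed by a colimit over a category with terminal object), so the left
adjoint `Lan_p` is fully faithful. Conversely, `Lan_p` sends representables to representables,
`y ⋙ Lan_p ≅ p ⋙ y`, so `p ⋙ y` is fully faithful and hence so is `p`.
-/

open CategoryTheory Limits Opposite

namespace CategoryTheory.Functor

universe w v₁ v₂ v₃ u₁ u₂ u₃

variable {C : Type u₁} [Category.{v₁} C] {D : Type u₂} [Category.{v₂} D]

noncomputable def fullyFaithfulLan (L : C ⥤ D) [L.Full] [L.Faithful]
    (H : Type u₃) [Category.{v₃} H] [∀ F : C ⥤ H, L.HasPointwiseLeftKanExtension F] :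
    (L.lan : (C ⥤ H) ⥤ (D ⥤ H)).FullyFaithful :=
  (L.lanAdjunction H).fullyFaithfulLOfIsIsoUnit

noncomputable def FullyFaithful.ofLanOp {F : C ⥤ D}
    [∀ P : Cᵒᵖ ⥤ Type max w v₁ v₂, F.op.HasLeftKanExtension P]
    (h : (F.op.lan : (Cᵒᵖ ⥤ Type max w v₁ v₂) ⥤ (Dᵒᵖ ⥤ Type max w v₁ v₂)).FullyFaithful) :
    F.FullyFaithful :=
  FullyFaithful.ofCompFaithful (G := uliftYoneda.{max w v₁})
    (((ULiftYoneda.fullyFaithful.{max w v₂} C).comp h).ofIso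
      (Presheaf.compULiftYonedaIsoULiftYonedaCompLan.{w} F).symm)

end CategoryTheory.Functor

universe u

theorem stmt5 {e b : Type u} [SmallCategory e] [SmallCategory b] (p : e ⥤ b) :
    (p.Full ∧ p.Faithful) ↔
      ((p.op.lan : (eᵒᵖ ⥤ Type u) ⥤ (bᵒᵖ ⥤ Type u)).Full ∧
        (p.op.lan : (eᵒᵖ ⥤ Type u) ⥤ (bᵒᵖ ⥤ Type u)).Faithful) := by
  constructor
  · rintro ⟨_, _⟩
    have hLan := p.op.fullyFaithfulLan (Type u)
    exact ⟨hLan.full, hLan.faithful⟩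
  · rintro ⟨_, _⟩
    have hp := Functor.FullyFaithful.ofLanOp.{u} (.ofFullyFaithful p.op.lan)
    exact ⟨hp.full, hp.faithful⟩
end

section
/- Let p : e → b be a functor between small categories. If the precomposition functor p* : [b, Set] → [e, Set] is fully faithful, then p is a lax epimorphism: for every category c, the precomposition functor Fun(b, c) → Fun(e, c) is fully faithful. -/
/-!
For `x : b`, the functor `y ↦ ∫^u b(x, p u) × b(p u, y)` of factorizations of morphisms out of `x`
through `p`, taken up to the zigzags generated by morphisms of `e`, is `Lan_p (p^* b(x, -))`, and
composing a factorization is the counit `∫^u b(x, p u) × b(p u, y) → b(x, y)`. Fullness of `p^*`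
on presheaves gives this counit a left inverse, so any two factorizations of the same morphism are
connected; faithfulness makes it surjective, so `𝟙 x` factors through `p`, i.e. every object of
`b` is a retract of some `p u`. In an arbitrary category `c`, a transformation
`γ : p ⋙ F ⟶ p ⋙ G` then extends along a retraction `x → p u → x` by `F g ≫ γ_u ≫ G m`; that this
is independent of the chosen factorization gives naturality, and the retractions give faithfulness.
-/

open CategoryTheory Opposite

universe w v u

namespace CategoryTheory.Functor

variable {e b : Type u} [SmallCategory e] [SmallCategory b]

structure Factorization (p : e ⥤ b) (x y : b) where
  obj : e
  fst : x ⟶ p.obj obj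
  snd : p.obj obj ⟶ y

namespace Factorization

variable {p : e ⥤ b} {x y : b}

def hom (t : p.Factorization x y) : x ⟶ y := t.fst ≫ t.snd

def Rel (t t' : p.Factorization x y) : Prop :=
  ∃ v : t.obj ⟶ t'.obj, t'.fst = t.fst ≫ p.map v ∧ t.snd = p.map v ≫ t'.snd

lemma Rel.hom_eq {t t' : p.Factorization x y} : t.Rel t' → t.hom = t'.hom := by
  rintro ⟨v, h₁, h₂⟩
  simp [hom, h₁, h₂]

def postcomp {z : b} (t : p.Factorization x y) (k : y ⟶ z) : p.Factorization x z :=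
  ⟨t.obj, t.fst, t.snd ≫ k⟩

lemma Rel.postcomp {z : b} {t t' : p.Factorization x y} (k : y ⟶ z) :
    t.Rel t' → (t.postcomp k).Rel (t'.postcomp k) := by
  rintro ⟨v, h₁, h₂⟩
  exact ⟨v, h₁, by simp [Factorization.postcomp, h₂]⟩

variable (p) in
def ofRetract {u : e} (r : Retract x (p.obj u)) : p.Factorization x x :=
  ⟨u, r.i, r.r⟩

@[simp]
lemma hom_ofRetract {u : e} (r : Retract x (p.obj u)) : (ofRetract p r).hom = 𝟙 x :=
  r.retract

end Factorization

section Presheaves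

variable (p : e ⥤ b) (x : b)

def factorizationFunctor : b ⥤ Type u where
  obj y := Quot (Factorization.Rel (p := p) (x := x) (y := y))
  map k := ↾(Quot.map (·.postcomp k) fun _ _ => Factorization.Rel.postcomp k)
  map_id y := by
    ext ⟨t⟩
    simp [Factorization.postcomp, Quot.map]
  map_comp k l := by
    ext ⟨t⟩
    simp [Factorization.postcomp, Quot.map]

def factorizationHom : p.factorizationFunctor x ⟶ coyoneda.obj (op x) where
  app y := ↾(Quot.lift Factorization.hom fun _ _ => Factorization.Rel.hom_eq)
  naturality y z k := by
    ext ⟨t⟩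
    simp [factorizationFunctor, Factorization.hom, Factorization.postcomp, Quot.map]

@[simp]
lemma factorizationHom_app_mk {y : b} (t : p.Factorization x y) :
    (p.factorizationHom x).app y (Quot.mk _ t) = t.hom :=
  rfl

def factorizationUnit : p ⋙ coyoneda.obj (op x) ⟶ p ⋙ p.factorizationFunctor x where
  app u := ↾fun g => Quot.mk _ ⟨u, g, 𝟙 _⟩
  naturality u v f := by
    ext g
    exact (Quot.sound ⟨f, rfl, by simp [Factorization.postcomp]⟩).symm

variable [((whiskeringLeft e b (Type u)).obj p).Full]

noncomputable def factorizationSection : coyoneda.obj (op x) ⟶ p.factorizationFunctor x :=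
  ((whiskeringLeft e b (Type u)).obj p).preimage (p.factorizationUnit x)

lemma factorizationSection_app_obj (u : e) :
    (p.factorizationSection x).app (p.obj u) = (p.factorizationUnit x).app u :=
  NatTrans.congr_app (((whiskeringLeft e b (Type u)).obj p).map_preimage _) u

lemma factorizationSection_factorizationHom_apply {y : b}
    (q : (p.factorizationFunctor x).obj y) :
    (p.factorizationSection x).app y ((p.factorizationHom x).app y q) = q := by
  induction q using Quot.ind with | mk t => ?_
  have h := (p.factorizationSection x).naturality_apply t.snd t.fst
  rw [factorizationSection_app_obj] at h
  rw [factorizationHom_app_mk]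
  refine h.trans ?_
  show Quot.mk _ (⟨t.obj, t.fst, 𝟙 _ ≫ t.snd⟩ : p.Factorization x y) = _
  rw [Category.id_comp]

variable {p x} in
lemma Factorization.sound {y : b} {t t' : p.Factorization x y} (h : t.hom = t'.hom) :
    Quot.mk Factorization.Rel t = Quot.mk Factorization.Rel t' := by
  rw [← p.factorizationSection_factorizationHom_apply x (Quot.mk _ t),
    ← p.factorizationSection_factorizationHom_apply x (Quot.mk _ t'), factorizationHom_app_mk,
    factorizationHom_app_mk, h]

variable [((whiskeringLeft e b (Type u)).obj p).Faithful]

lemma factorizationHom_factorizationSection_apply {y : b} (f : x ⟶ y) :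
    (p.factorizationHom x).app y ((p.factorizationSection x).app y f) = f := by
  have : p.factorizationSection x ≫ p.factorizationHom x = 𝟙 _ := by
    refine ((whiskeringLeft e b (Type u)).obj p).map_injective ?_
    ext u g
    show (p.factorizationHom x).app _ ((p.factorizationSection x).app (p.obj u) g) = g
    rw [factorizationSection_app_obj]
    exact Category.comp_id g
  exact ConcreteCategory.congr_hom (NatTrans.congr_app this y) f

lemma exists_retract_obj : ∃ u, Nonempty (Retract x (p.obj u)) := by
  obtain ⟨t, ht⟩ := Quot.exists_rep ((p.factorizationSection x).app x (𝟙 x))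
  have := p.factorizationHom_factorizationSection_apply x (𝟙 x)
  rw [← ht, factorizationHom_app_mk] at this
  exact ⟨t.obj, ⟨⟨t.fst, t.snd, this⟩⟩⟩

end Presheaves

namespace Factorization

variable {p : e ⥤ b} {c : Type*} [Category c] {F G : b ⥤ c} {x y : b}

def transport (γ : p ⋙ F ⟶ p ⋙ G) (t : p.Factorization x y) : F.obj x ⟶ G.obj y :=
  F.map t.fst ≫ γ.app t.obj ≫ G.map t.snd

lemma Rel.transport_eq (γ : p ⋙ F ⟶ p ⋙ G) {t t' : p.Factorization x y} (h : t.Rel t') :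
    t.transport γ = t'.transport γ := by
  obtain ⟨v, h₁, h₂⟩ := h
  have := γ.naturality v
  dsimp only [comp_obj, comp_map] at this
  simp only [transport, h₁, h₂, map_comp, Category.assoc]
  rw [reassoc_of% this]

lemma transport_eq_of_hom_eq [((whiskeringLeft e b (Type u)).obj p).Full]
    (γ : p ⋙ F ⟶ p ⋙ G) {t t' : p.Factorization x y} (h : t.hom = t'.hom) :
    t.transport γ = t'.transport γ :=
  congrArg (Quot.lift _ fun _ _ => Rel.transport_eq γ) (sound h)

lemma transport_whiskerLeft (α : F ⟶ G) (t : p.Factorization x y) :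
    t.transport (whiskerLeft p α) = F.map t.hom ≫ α.app y := by
  simp [transport, hom]

end Factorization

variable {p : e ⥤ b} {c : Type*} [Category c]

lemma faithful_whiskeringLeft_obj_of_retract (hp : ∀ x, ∃ u, Nonempty (Retract x (p.obj u))) :
    ((whiskeringLeft e b c).obj p).Faithful where
  map_injective {F G} α β hαβ := by
    ext x
    obtain ⟨u, ⟨r⟩⟩ := hp x
    have hα := (Factorization.ofRetract p r).transport_whiskerLeft α
    have hβ := (Factorization.ofRetract p r).transport_whiskerLeft β
    simp only [Factorization.hom_ofRetract, map_id, Category.id_comp] at hα hβ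
    rw [← hα, ← hβ]
    exact congrArg (Factorization.ofRetract p r).transport hαβ

lemma full_whiskeringLeft_obj_of_retract [((whiskeringLeft e b (Type u)).obj p).Full]
    (hp : ∀ x, ∃ u, Nonempty (Retract x (p.obj u))) :
    ((whiskeringLeft e b c).obj p).Full where
  map_surjective {F G} γ := by
    choose u r using hp
    refine ⟨{ app x := (Factorization.ofRetract p (r x).some).transport γ
              naturality x y k := ?_ }, ?_⟩
    · have h := Factorization.transport_eq_of_hom_eq γ
        (t := ⟨_, k ≫ (r y).some.i, (r y).some.r⟩) (t' := ⟨_, (r x).some.i, (r x).some.r ≫ k⟩)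
        (by simp [Factorization.hom])
      simpa [Factorization.transport, Factorization.ofRetract] using h
    · ext v
      have h := Factorization.transport_eq_of_hom_eq γ
        (t := Factorization.ofRetract p (r (p.obj v)).some) (t' := ⟨v, 𝟙 _, 𝟙 _⟩)
        (by simp [Factorization.hom, Factorization.ofRetract])
      simpa [Factorization.transport] using h

end CategoryTheory.Functor

theorem stmt7 {e b : Type u} [SmallCategory e] [SmallCategory b] (p : e ⥤ b)
    (h : ((Functor.whiskeringLeft e b (Type u)).obj p).Full ∧
      ((Functor.whiskeringLeft e b (Type u)).obj p).Faithful) :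
    ∀ (c : Type v) (_ : Category.{w} c),
      ((Functor.whiskeringLeft e b c).obj p).Full ∧ ((Functor.whiskeringLeft e b c).obj p).Faithful := by
  obtain ⟨_, _⟩ := h
  intro c _
  have hp x := p.exists_retract_obj x
  exact ⟨Functor.full_whiskeringLeft_obj_of_retract hp,
    Functor.faithful_whiskeringLeft_obj_of_retract hp⟩
end

section
/- Let p : e → b be a functor between small categories and suppose p* : [b, Set] → [e, Set] (precomposition with p) is an equivalence of categories. Then p is both fully faithful and a lax epimorphism. -/
/-!
Since `p^*` is fully faithful, the counit of `Lan_p ⊣ p^*` is invertible. At the corepresentable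
`b(x, -)` and the object `y`, this says that `b(x, y)` is the colimit of `b(x, p -)` over `p ↓ y`:
every `f : x ⟶ y` factors as `u ≫ v` through some `p w`, and for functors `F G : b ⥤ c` and
`τ : p ⋙ F ⟶ p ⋙ G` the composite `F u ≫ τ_w ≫ G v` only depends on `f`. Its value at
`f = 𝟙 x` is the unique extension of `τ` to `F ⟶ G`.

For `p` itself, essential surjectivity of `p^*` gives `F` with `p ⋙ F ≅ e(w, -)`. The Yoneda
element of `F` at `p w` yields a retraction of `e(w, -) ⟶ p ⋙ b(p w, -)`, `k ↦ p k`, and since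
`p^*` is full, the Yoneda lemma shows that this retraction is an inverse.
-/

open CategoryTheory Limits

universe w v u v₁ v₂ v₃ u₁ u₂ u₃

namespace CategoryTheory.Functor

open Opposite

section Factorization

variable {e : Type u₁} {b : Type u₂} [Category.{v₁} e] [Category.{v₂} b] (p : e ⥤ b)

def factorizationCocone (x y : b) :
    (CostructuredArrow.proj p y ⋙ p ⋙ coyoneda.obj (op x)).CoconeTypes where
  pt := x ⟶ y
  ι j u := u ≫ j.hom
  ι_naturality {j j'} φ := by
    ext (u : x ⟶ p.obj j.left)
    show (u ≫ p.map φ.left) ≫ j'.hom = u ≫ j.hom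
    rw [Category.assoc, CostructuredArrow.w]

variable {p} {c : Type u₃} [Category.{v₃} c] {F G : b ⥤ c}

def extendHomCocone (τ : p ⋙ F ⟶ p ⋙ G) (x y : b) :
    (CostructuredArrow.proj p y ⋙ p ⋙ coyoneda.obj (op x)).CoconeTypes where
  pt := F.obj x ⟶ G.obj y
  ι j u := F.map u ≫ τ.app j.left ≫ G.map j.hom
  ι_naturality {j j'} φ := by
    ext (u : x ⟶ p.obj j.left)
    show F.map (u ≫ p.map φ.left) ≫ τ.app j'.left ≫ G.map j'.hom =
      F.map u ≫ τ.app j.left ≫ G.map j.hom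
    have naturality := τ.naturality φ.left
    dsimp at naturality
    rw [F.map_comp, Category.assoc, reassoc_of% naturality, ← G.map_comp, CostructuredArrow.w]

variable (hp : ∀ x y, (p.factorizationCocone x y).IsColimit)

include hp in
lemma exists_factorization {x y : b} (f : x ⟶ y) :
    ∃ (w : e) (u : x ⟶ p.obj w) (v : p.obj w ⟶ y), u ≫ v = f := by
  obtain ⟨j, u, rfl⟩ := (hp x y).ι_jointly_surjective f
  exact ⟨j.left, u, j.hom, rfl⟩

noncomputable def extendHom (τ : p ⋙ F ⟶ p ⋙ G) {x y : b} (f : x ⟶ y) :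
    F.obj x ⟶ G.obj y :=
  (hp x y).desc (extendHomCocone τ x y) f

variable (τ : p ⋙ F ⟶ p ⋙ G)

lemma extendHom_comp {x y : b} {w : e} (u : x ⟶ p.obj w) (v : p.obj w ⟶ y) :
    extendHom hp τ (u ≫ v) = F.map u ≫ τ.app w ≫ G.map v :=
  (hp x y).fac_apply (extendHomCocone τ x y) (CostructuredArrow.mk v) u

lemma map_comp_extendHom {x y z : b} (f : x ⟶ y) (g : y ⟶ z) :
    F.map f ≫ extendHom hp τ g = extendHom hp τ (f ≫ g) := by
  obtain ⟨w, u, v, rfl⟩ := exists_factorization hp g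
  rw [extendHom_comp, ← Category.assoc f, extendHom_comp, F.map_comp, Category.assoc]

lemma extendHom_comp_map {x y z : b} (f : x ⟶ y) (g : y ⟶ z) :
    extendHom hp τ f ≫ G.map g = extendHom hp τ (f ≫ g) := by
  obtain ⟨w, u, v, rfl⟩ := exists_factorization hp f
  rw [extendHom_comp, Category.assoc u, extendHom_comp, G.map_comp]
  simp only [Category.assoc]

lemma extendHom_id_obj (w : e) : extendHom hp τ (𝟙 (p.obj w)) = τ.app w := by
  simpa using extendHom_comp hp τ (𝟙 (p.obj w)) (𝟙 (p.obj w))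

lemma extendHom_whiskerLeft (β : F ⟶ G) {x y : b} (f : x ⟶ y) :
    extendHom hp (whiskerLeft p β) f = F.map f ≫ β.app y := by
  obtain ⟨w, u, v, rfl⟩ := exists_factorization hp f
  rw [extendHom_comp, whiskerLeft_app, β.naturality, G.map_comp, β.naturality_assoc]

noncomputable def fullyFaithfulWhiskeringLeftObj (c : Type u₃) [Category.{v₃} c] :
    ((whiskeringLeft e b c).obj p).FullyFaithful where
  preimage τ :=
    { app x := extendHom hp τ (𝟙 x)
      naturality x y f := by
        rw [map_comp_extendHom, extendHom_comp_map, Category.comp_id, Category.id_comp] }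
  map_preimage τ := by
    ext w
    exact extendHom_id_obj hp τ w
  preimage_map β := by
    ext x
    simp [extendHom_whiskerLeft]

end Factorization

section Representable

variable {e : Type u₁} {b : Type u₂} [Category.{v₁} e] [Category.{v₁} b] (p : e ⥤ b)

@[simps]
def coyonedaMap (w : e) : coyoneda.obj (op w) ⟶ p ⋙ coyoneda.obj (op (p.obj w)) where
  app _ := TypeCat.ofHom fun f ↦ p.map f

lemma isIso_coyonedaMap [((whiskeringLeft e b (Type v₁)).obj p).Full]
    [((whiskeringLeft e b (Type v₁)).obj p).EssSurj] (w : e) : IsIso (p.coyonedaMap w) := by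
  let P := (whiskeringLeft e b (Type v₁)).obj p
  let F := P.objPreimage (coyoneda.obj (op w))
  let φ : p ⋙ F ≅ coyoneda.obj (op w) := P.objObjPreimageIso _
  let ξ : F.obj (p.obj w) := φ.inv.app w (𝟙 w)
  let ρ := whiskerLeft p (coyonedaEquiv.symm ξ) ≫ φ.hom
  have hσρ : p.coyonedaMap w ≫ ρ = 𝟙 _ := by
    apply coyonedaEquiv.injective
    rw [coyonedaEquiv_comp, coyonedaEquiv_apply, coyonedaEquiv_apply]
    simp [ρ, ξ]
  have hρ : ρ.app w (𝟙 (p.obj w)) = 𝟙 w := by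
    simpa using ConcreteCategory.congr_hom (NatTrans.congr_app hσρ w) (𝟙 w)
  have hρσ : ρ ≫ p.coyonedaMap w = 𝟙 _ := by
    obtain ⟨γ, hγ⟩ := P.map_surjective (ρ ≫ p.coyonedaMap w)
    have hγ_id : γ = 𝟙 _ := by
      apply coyonedaEquiv.injective
      rw [coyonedaEquiv_apply, coyonedaEquiv_apply]
      simpa [P, hρ] using ConcreteCategory.congr_hom (NatTrans.congr_app hγ w) (𝟙 (p.obj w))
    rw [← hγ, hγ_id, P.map_id]
    rfl
  exact ⟨ρ, hσρ, hρσ⟩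

lemma map_bijective_of_whiskeringLeftObj [((whiskeringLeft e b (Type v₁)).obj p).Full]
    [((whiskeringLeft e b (Type v₁)).obj p).EssSurj] (w w' : e) :
    Function.Bijective (p.map : (w ⟶ w') → (p.obj w ⟶ p.obj w')) := by
  have := p.isIso_coyonedaMap w
  exact (isIso_iff_bijective ((p.coyonedaMap w).app w')).1 inferInstance

end Representable

-- This is the counit of `Lan_p ⊣ p^*` at `coyoneda.obj (op x)`, evaluated at `y`.
lemma isColimit_factorizationCocone {e b : Type u} [SmallCategory e] [SmallCategory b]
    (p : e ⥤ b)
    [((whiskeringLeft e b (Type u)).obj p).Full] [((whiskeringLeft e b (Type u)).obj p).Faithful]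
    (x y : b) : (p.factorizationCocone x y).IsColimit := by
  have : (coyoneda.obj (op x)).IsLeftKanExtension (𝟙 (p ⋙ coyoneda.obj (op x))) :=
    (p.isIso_lanAdjunction_counit_app_iff _).1 inferInstance
  have hlan := isPointwiseLeftKanExtensionOfIsLeftKanExtension (coyoneda.obj (op x))
    (𝟙 (p ⋙ coyoneda.obj (op x)))
  exact (Types.isColimit_iff_coconeTypesIsColimit _).1 ⟨hlan y⟩

end CategoryTheory.Functor

theorem stmt12 {e b : Type u} [SmallCategory e] [SmallCategory b] (p : e ⥤ b)
    (h : ((Functor.whiskeringLeft e b (Type u)).obj p).IsEquivalence) :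
    (p.Full ∧ p.Faithful) ∧
      ∀ (c : Type v) (_ : Category.{w} c),
        ((Functor.whiskeringLeft e b c).obj p).Full ∧ ((Functor.whiskeringLeft e b c).obj p).Faithful := by
  have hbij := p.map_bijective_of_whiskeringLeftObj
  have hp := p.isColimit_factorizationCocone
  refine ⟨⟨⟨(hbij _ _).surjective⟩, ⟨fun hk => (hbij _ _).injective hk⟩⟩, fun c _ => ?_⟩
  let hpc := Functor.fullyFaithfulWhiskeringLeftObj hp c
  exact ⟨hpc.full, hpc.faithful⟩
end
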